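/- Fix k > 0 and 0 < d < L_C. Let ψ : ℝ → ℝ be a smooth function with 0 ≤ ψ ≤ 1, ψ(z) = 0 for z ≤ d, and ψ(z) = 1 for z ≥ L_C. Then there exists a constant C > 0, depending only on k, d, L_C and ψ, such that for all complex x, y with Re x ≥ 0, Im x ≥ 0, Re y ≥ 0 and Im y ≥ 0: |∫_d^∞ ψ(z) e^{2ikz} (x+z)^{−1/2} (y+z)^{−3/2} dz| ≤ C |x+d|^{−1/2} |y+d|^{−3/2}, where the complex powers (x+z)^{−1/2} and (y+z)^{−3/2} are principal (well defined since Re(x+z) > 0 and Re(y+z) > 0 for z ≥ d). -/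

import Mathlib

open MeasureTheory Set Filter Topology

noncomputable section

lemma stmt8_ne {x : ℂ} (hx : 0 ≤ x.re) {z : ℝ} (hz : 0 < z) : x + ↑z ≠ 0 := by
  intro h
  have h2 : (x + (z:ℂ)).re = 0 := by rw [h]; simp
  simp only [Complex.add_re, Complex.ofReal_re] at h2
  linarith

lemma stmt8_mono {x : ℂ} (hx : 0 ≤ x.re) {d z : ℝ} (hd : 0 ≤ d) (hdz : d ≤ z) :
    ‖x + ↑d‖ ≤ ‖x + ↑z‖ := by
  rw [Complex.norm_def, Complex.norm_def]
  apply Real.sqrt_le_sqrt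
  simp only [Complex.normSq_apply, Complex.add_re, Complex.add_im, Complex.ofReal_re,
    Complex.ofReal_im]
  nlinarith

lemma stmt8_zle {x : ℂ} (hx : 0 ≤ x.re) (z : ℝ) : z ≤ ‖x + ↑z‖ := by
  refine le_trans ?_ (Complex.re_le_norm _)
  simp only [Complex.add_re, Complex.ofReal_re]
  linarith

lemma stmt8_two {x : ℂ} (hx : 0 ≤ x.re) {d z : ℝ} (hd : 0 ≤ d) (hdz : d ≤ z) :
    ‖x + ↑d‖ - d + z ≤ 2 * ‖x + ↑z‖ := by
  have h1 := stmt8_mono hx hd hdz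
  have h2 := stmt8_zle hx z
  linarith

lemma stmt8_half {u w q : ℝ} (hu : 0 < u) (hw : u ≤ 2 * w) (hq : 0 ≤ q) :
    w ^ (-q) ≤ 2 ^ q * u ^ (-q) := by
  have h1 : w ^ (-q) ≤ (u / 2) ^ (-q) :=
    Real.rpow_le_rpow_of_nonpos (by linarith) (by linarith) (by linarith)
  rw [Real.div_rpow hu.le (by norm_num : (0:ℝ) ≤ 2)] at h1
  have h2 : (2:ℝ) ^ (-q) = ((2:ℝ) ^ q)⁻¹ := Real.rpow_neg (by norm_num) q
  calc w ^ (-q) ≤ u ^ (-q) / 2 ^ (-q) := h1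
    _ = 2 ^ q * u ^ (-q) := by
        rw [h2]
        have : ((2:ℝ) ^ q) ≠ 0 := (Real.rpow_pos_of_pos (by norm_num) q).ne'
        field_simp

lemma stmt8_abs {w : ℂ} (hw : w ≠ 0) {c : ℂ} {r : ℝ} (h : c = (r:ℂ)) :
    ‖w ^ c‖ = ‖w‖ ^ r := by
  subst h
  rw [Complex.norm_cpow_of_ne_zero hw]
  simp

lemma stmt8_cpow {x : ℂ} (hx : 0 ≤ x.re) (c c' : ℂ) (h : c' = c - 1) {z : ℝ} (hz : 0 < z) :
    HasDerivAt (fun z : ℝ => (x + ↑z) ^ c) (c * (x + ↑z) ^ c') z := by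
  have h0 : x + (z:ℂ) ∈ Complex.slitPlane := by
    rw [Complex.mem_slitPlane_iff]
    left
    simp only [Complex.add_re, Complex.ofReal_re]
    linarith
  have h1 : HasDerivAt (fun w : ℂ => x + w) 1 (z:ℂ) := (hasDerivAt_id _).const_add x
  have hc : HasDerivAt (fun w : ℂ => w ^ c) (c * (x + (z:ℂ)) ^ (c - 1)) (x + (z:ℂ)) := by
    simpa using (hasDerivAt_id (x + (z:ℂ))).cpow_const h0
  have h2 := (hc.comp (z:ℂ) h1).comp_ofReal
  subst h
  simpa using h2

lemma stmt8_int {p : ℝ} (hp : p < -1) {c d : ℝ} (hcd : 0 < c + d) :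
    IntegrableOn (fun z : ℝ => (c + z) ^ p) (Ioi d) volume ∧
      ∫ z in Ioi d, (c + z) ^ p = -(c + d) ^ (p + 1) / (p + 1) := by
  have hne : p + 1 ≠ 0 := by linarith
  have hderiv : ∀ z ∈ Ici d, HasDerivAt (fun z : ℝ => (c + z) ^ (p + 1) / (p + 1))
      ((c + z) ^ p) z := by
    intro z hz
    have hz0 : 0 < c + z := by have : d ≤ z := hz; linarith
    have h1 : HasDerivAt (fun z : ℝ => c + z) 1 z := (hasDerivAt_id z).const_add c
    have h2 : HasDerivAt (fun t : ℝ => t ^ (p + 1)) ((p + 1) * (c + z) ^ (p + 1 - 1)) (c + z) :=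
      Real.hasDerivAt_rpow_const (Or.inl hz0.ne')
    rw [show p + 1 - 1 = p by ring] at h2
    have h3 := (h2.comp z h1).div_const (p + 1)
    simpa [mul_comm, mul_div_assoc, div_self hne] using h3
  have hpos : ∀ z ∈ Ioi d, 0 ≤ (c + z) ^ p := by
    intro z hz
    have h : 0 < c + z := by have : d < z := hz; linarith
    positivity
  have htend : Tendsto (fun z : ℝ => (c + z) ^ (p + 1) / (p + 1)) atTop (𝓝 0) := by
    have h1 : Tendsto (fun z : ℝ => c + z) atTop atTop :=
      tendsto_atTop_add_const_left atTop c tendsto_id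
    have h2 : Tendsto (fun s : ℝ => s ^ (p + 1)) atTop (𝓝 0) := by
      have := tendsto_rpow_neg_atTop (y := -(p + 1)) (by linarith)
      simpa using this
    have := (h2.comp h1).div_const (p + 1)
    simpa using this
  refine ⟨integrableOn_Ioi_deriv_of_nonneg' hderiv hpos htend, ?_⟩
  rw [integral_Ioi_of_hasDerivAt_of_nonneg' hderiv hpos htend]
  ring

lemma stmt8_absE (k z : ℝ) : ‖Complex.exp (2 * ↑k * ↑z * Complex.I)‖ = 1 := by
  rw [Complex.norm_exp]
  simp

lemma stmt8_absV {k : ℝ} (hk : 0 < k) (z : ℝ) :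
    ‖Complex.exp (2 * ↑k * ↑z * Complex.I) / (2 * ↑k * Complex.I)‖ = 1 / (2 * k) := by
  rw [norm_div, stmt8_absE]
  simp [abs_of_pos hk]

lemma stmt8_c0 {k : ℝ} (hk : 0 < k) : (2 * (k:ℂ) * Complex.I) ≠ 0 :=
  mul_ne_zero (mul_ne_zero two_ne_zero (Complex.ofReal_ne_zero.mpr hk.ne')) Complex.I_ne_zero

lemma stmt8_hV {k : ℝ} (hk : 0 < k) (z : ℝ) :
    HasDerivAt (fun z : ℝ => Complex.exp (2 * ↑k * ↑z * Complex.I) / (2 * ↑k * Complex.I))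
      (Complex.exp (2 * ↑k * ↑z * Complex.I)) z := by
  have hlin : HasDerivAt (fun z : ℝ => 2 * (k:ℂ) * ↑z * Complex.I) (2 * ↑k * Complex.I) z := by
    have h1 := ((hasDerivAt_id z).ofReal_comp (z := z)).const_mul (2 * (k:ℂ))
    have h2 := h1.mul_const Complex.I
    simpa using h2
  have hE := hlin.cexp
  have := hE.div_const (2 * (k:ℂ) * Complex.I)
  rw [mul_div_assoc, div_self (stmt8_c0 hk), mul_one] at this
  exact this

lemma stmt8_swap {A B : ℝ} (hA : 0 < A) (hB : 0 < B) (hBA : B ≤ A) :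
    A ^ (-(3/2) : ℝ) * B ^ (-(1/2) : ℝ) ≤ A ^ (-(1/2) : ℝ) * B ^ (-(3/2) : ℝ) := by
  have e1 : A ^ (-(3/2) : ℝ) = A ^ (-(1/2) : ℝ) * A ^ ((-1) : ℝ) := by
    rw [← Real.rpow_add hA]; norm_num
  have e2 : B ^ (-(1/2) : ℝ) = B ^ (-(3/2) : ℝ) * B ^ ((1) : ℝ) := by
    rw [← Real.rpow_add hB]; norm_num
  rw [e1, e2, Real.rpow_neg_one, Real.rpow_one]
  have p1 : 0 < A ^ (-(1/2) : ℝ) := Real.rpow_pos_of_pos hA _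
  have p2 : 0 < B ^ (-(3/2) : ℝ) := Real.rpow_pos_of_pos hB _
  have key : A⁻¹ * B ≤ 1 := by
    rw [← div_eq_inv_mul]
    exact (div_le_one hA).mpr hBA
  calc A ^ (-(1/2) : ℝ) * A⁻¹ * (B ^ (-(3/2) : ℝ) * B)
      = (A ^ (-(1/2) : ℝ) * B ^ (-(3/2) : ℝ)) * (A⁻¹ * B) := by ring
    _ ≤ (A ^ (-(1/2) : ℝ) * B ^ (-(3/2) : ℝ)) * 1 :=
        mul_le_mul_of_nonneg_left key (by positivity)
    _ = A ^ (-(1/2) : ℝ) * B ^ (-(3/2) : ℝ) := by ring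

lemma stmt8_mul4 {a b c a' b' c' t : ℝ} (ha : a ≤ a') (hb : b ≤ b') (hc : c ≤ c')
    (hb0 : 0 ≤ b) (hc0 : 0 ≤ c) (ha'0 : 0 ≤ a') (hb'0 : 0 ≤ b') (ht : 0 ≤ t) :
    a * b * c * t ≤ a' * b' * c' * t := by
  apply mul_le_mul_of_nonneg_right _ ht
  exact mul_le_mul (mul_le_mul ha hb hb0 ha'0) hc hc0 (mul_nonneg ha'0 hb'0)

lemma stmt8_mul4' {a b c e a' b' c' e' : ℝ} (ha : a ≤ a') (hb : b ≤ b') (hc : c ≤ c')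
    (he : e ≤ e') (hb0 : 0 ≤ b) (hc0 : 0 ≤ c) (he0 : 0 ≤ e) (ha'0 : 0 ≤ a') (hb'0 : 0 ≤ b')
    (hc'0 : 0 ≤ c') : a * b * c * e ≤ a' * b' * c' * e' :=
  mul_le_mul (mul_le_mul (mul_le_mul ha hb hb0 ha'0) hc hc0 (mul_nonneg ha'0 hb'0)) he he0
    (mul_nonneg (mul_nonneg ha'0 hb'0) hc'0)

lemma stmt8_bound {f : ℝ → ℂ} {g : ℝ → ℝ} {d : ℝ}
    (hmeas : AEStronglyMeasurable f (volume.restrict (Ioi d)))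
    (hg : IntegrableOn g (Ioi d) volume)
    (h : ∀ z ∈ Ioi d, ‖f z‖ ≤ g z) :
    IntegrableOn f (Ioi d) volume ∧ ‖∫ z in Ioi d, f z‖ ≤ ∫ z in Ioi d, g z := by
  have hae : ∀ᵐ z ∂(volume.restrict (Ioi d)), ‖f z‖ ≤ g z := by
    filter_upwards [ae_restrict_mem measurableSet_Ioi] with z hz using h z hz
  exact ⟨hg.mono' hmeas hae, norm_integral_le_of_norm_le hg hae⟩

set_option maxHeartbeats 1000000 in
/-- Integration-by-parts bound: for a smooth cutoff `ψ` vanishing below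
`d` and equal to `1` above `L`, there is `C > 0` (depending only on `k, d, L, ψ`) such
that for all `x, y` in the closed first quadrant
`|∫_d^∞ ψ(z) e^{2ikz} (x+z)^{-1/2} (y+z)^{-3/2} dz| ≤ C |x+d|^{-1/2} |y+d|^{-3/2}`. -/
theorem statement_8 (k d L : ℝ) (hk : 0 < k) (hd : 0 < d) (hdL : d < L)
    (ψ : ℝ → ℝ) (hψ : ContDiff ℝ (⊤ : ℕ∞) ψ) (hψ01 : ∀ z : ℝ, 0 ≤ ψ z ∧ ψ z ≤ 1)
    (hψ0 : ∀ z : ℝ, z ≤ d → ψ z = 0) (hψ1 : ∀ z : ℝ, L ≤ z → ψ z = 1) :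
    ∃ C > 0, ∀ x y : ℂ, 0 ≤ x.re → 0 ≤ x.im → 0 ≤ y.re → 0 ≤ y.im →
      IntegrableOn (fun z : ℝ => (ψ z : ℂ) * Complex.exp (2 * k * z * Complex.I) *
        (x + z) ^ (-(1/2 : ℂ)) * (y + z) ^ (-(3/2 : ℂ))) (Set.Ioi d) volume ∧
      ‖∫ z in Set.Ioi d, (ψ z : ℂ) * Complex.exp (2 * k * z * Complex.I) *
          (x + z) ^ (-(1/2 : ℂ)) * (y + z) ^ (-(3/2 : ℂ))‖ ≤
        C * ‖x + d‖ ^ (-(1/2 : ℝ)) * ‖y + d‖ ^ (-(3/2 : ℝ)) := by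
  have hψdiff : Differentiable ℝ ψ := hψ.differentiable (by simp)
  have hDψcont : Continuous (deriv ψ) := hψ.continuous_deriv (by simp)
  have hDψ0 : ∀ z : ℝ, z < d ∨ L < z → deriv ψ z = 0 := by
    intro z hz
    rcases hz with h | h
    · have hev : ψ =ᶠ[𝓝 z] fun _ => (0:ℝ) := by
        filter_upwards [Iio_mem_nhds h] with w hw using hψ0 w hw.le
      rw [hev.deriv_eq]; exact deriv_const z 0
    · have hev : ψ =ᶠ[𝓝 z] fun _ => (1:ℝ) := by
        filter_upwards [Ioi_mem_nhds h] with w hw using hψ1 w hw.le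
      rw [hev.deriv_eq]; exact deriv_const z 1
  have hsupp : HasCompactSupport (deriv ψ) := by
    apply HasCompactSupport.intro (isCompact_Icc (a := d) (b := L))
    intro z hz
    simp only [mem_Icc, not_and_or, not_le] at hz
    rcases hz with h | h
    · exact hDψ0 z (Or.inl h)
    · exact hDψ0 z (Or.inr h)
  have hDψint : Integrable (fun z : ℝ => |deriv ψ z|) :=
    (hDψcont.integrable_of_hasCompactSupport hsupp).abs
  have hK0 : 0 ≤ ∫ z in Ioi d, |deriv ψ z| := integral_nonneg fun z => abs_nonneg _
  have hp32 : (0:ℝ) < 2 ^ ((3:ℝ)/2) := Real.rpow_pos_of_pos (by norm_num) _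
  have hp52 : (0:ℝ) < 2 ^ ((5:ℝ)/2) := Real.rpow_pos_of_pos (by norm_num) _
  refine ⟨((∫ z in Ioi d, |deriv ψ z|) + 2 ^ ((3:ℝ)/2) + 2 ^ ((5:ℝ)/2)) / (2 * k),
    by positivity, fun x y hxre hxim hyre hyim => ?_⟩
  have hdA : d ≤ ‖x + (d:ℂ)‖ := stmt8_zle hxre d
  have hdB : d ≤ ‖y + (d:ℂ)‖ := stmt8_zle hyre d
  set A := ‖x + (d:ℂ)‖ with hAdef
  set B := ‖y + (d:ℂ)‖ with hBdef
  have hA0 : 0 < A := lt_of_lt_of_le hd hdA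
  have hB0 : 0 < B := lt_of_lt_of_le hd hdB
  set V : ℝ → ℂ := fun z : ℝ =>
    Complex.exp (2 * k * z * Complex.I) / (2 * k * Complex.I) with hVdef
  set F : ℝ → ℂ := fun z : ℝ => (ψ z : ℂ) * Complex.exp (2 * k * z * Complex.I) *
    (x + z) ^ (-(1/2 : ℂ)) * (y + z) ^ (-(3/2 : ℂ)) with hFdef
  set W1 : ℝ → ℂ := fun z : ℝ =>
    ((deriv ψ z : ℝ) : ℂ) * (x + z) ^ (-(1/2 : ℂ)) * (y + z) ^ (-(3/2 : ℂ)) * V z with hW1def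
  set W2 : ℝ → ℂ := fun z : ℝ =>
    (ψ z : ℂ) * (-(1/2 : ℂ) * (x + z) ^ (-(3/2 : ℂ))) * (y + z) ^ (-(3/2 : ℂ)) * V z with hW2def
  set W3 : ℝ → ℂ := fun z : ℝ =>
    (ψ z : ℂ) * (x + z) ^ (-(1/2 : ℂ)) * (-(3/2 : ℂ) * (y + z) ^ (-(5/2 : ℂ))) * V z with hW3def
  set G : ℝ → ℂ := fun z : ℝ =>
    (ψ z : ℂ) * (x + z) ^ (-(1/2 : ℂ)) * (y + z) ^ (-(3/2 : ℂ)) * V z with hGdef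
  -- the derivative of G
  have hG' : ∀ z ∈ Ici d, HasDerivAt G (F z + (W1 z + W2 z + W3 z)) z := by
    intro z hz
    have hz0 : 0 < z := lt_of_lt_of_le hd hz
    have hψz : HasDerivAt (fun z : ℝ => ((ψ z : ℝ) : ℂ)) (((deriv ψ z : ℝ) : ℂ)) z :=
      (hψdiff z).hasDerivAt.ofReal_comp
    have hPz := stmt8_cpow hxre (-(1/2 : ℂ)) (-(3/2 : ℂ)) (by norm_num) hz0
    have hQz := stmt8_cpow hyre (-(3/2 : ℂ)) (-(5/2 : ℂ)) (by norm_num) hz0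
    have hVz := stmt8_hV hk z
    have hcomb := ((hψz.mul hPz).mul hQz).mul hVz
    have heq : F z + (W1 z + W2 z + W3 z) =
        (((((deriv ψ z : ℝ) : ℂ) * (x + ↑z) ^ (-(1/2 : ℂ)) +
              (ψ z : ℂ) * (-(1/2 : ℂ) * (x + ↑z) ^ (-(3/2 : ℂ)))) * (y + ↑z) ^ (-(3/2 : ℂ)) +
            (ψ z : ℂ) * (x + ↑z) ^ (-(1/2 : ℂ)) * (-(3/2 : ℂ) * (y + ↑z) ^ (-(5/2 : ℂ)))) * V z +
          (ψ z : ℂ) * (x + ↑z) ^ (-(1/2 : ℂ)) * (y + ↑z) ^ (-(3/2 : ℂ)) *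
            Complex.exp (2 * ↑k * ↑z * Complex.I)) := by
      simp only [hFdef, hW1def, hW2def, hW3def]
      ring
    rw [heq]
    exact hcomb
  -- G vanishes at d and at infinity
  have hGd : G d = 0 := by
    rw [hGdef]
    simp [hψ0 d le_rfl]
  -- abs computations
  have habsP : ∀ z : ℝ, 0 < z →
      ‖(x + (z:ℂ)) ^ (-(1/2 : ℂ))‖ = ‖x + (z:ℂ)‖ ^ (-(1/2) : ℝ) :=
    fun z hz => stmt8_abs (stmt8_ne hxre hz) (by norm_num)
  have habsP3 : ∀ z : ℝ, 0 < z →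
      ‖(x + (z:ℂ)) ^ (-(3/2 : ℂ))‖ = ‖x + (z:ℂ)‖ ^ (-(3/2) : ℝ) :=
    fun z hz => stmt8_abs (stmt8_ne hxre hz) (by norm_num)
  have habsQ : ∀ z : ℝ, 0 < z →
      ‖(y + (z:ℂ)) ^ (-(3/2 : ℂ))‖ = ‖y + (z:ℂ)‖ ^ (-(3/2) : ℝ) :=
    fun z hz => stmt8_abs (stmt8_ne hyre hz) (by norm_num)
  have habsQ5 : ∀ z : ℝ, 0 < z →
      ‖(y + (z:ℂ)) ^ (-(5/2 : ℂ))‖ = ‖y + (z:ℂ)‖ ^ (-(5/2) : ℝ) :=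
    fun z hz => stmt8_abs (stmt8_ne hyre hz) (by norm_num)
  have habs12 : ‖-(1/2 : ℂ)‖ = 1/2 := by
    rw [show (-(1/2 : ℂ)) = ((-(1/2) : ℝ) : ℂ) by norm_num, Complex.norm_real, Real.norm_eq_abs]
    norm_num
  have habs32 : ‖-(3/2 : ℂ)‖ = 3/2 := by
    rw [show (-(3/2 : ℂ)) = ((-(3/2) : ℝ) : ℂ) by norm_num, Complex.norm_real, Real.norm_eq_abs]
    norm_num
  -- tendsto of G at infinity
  have hGtend : Tendsto G atTop (𝓝 0) := by
    have htt : Tendsto (fun z : ℝ => (A ^ (-(1/2) : ℝ) / (2*k)) * z ^ (-(3/2) : ℝ))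
        atTop (𝓝 0) := by
      have h := (tendsto_rpow_neg_atTop (y := (3/2:ℝ)) (by norm_num)).const_mul
        (A ^ (-(1/2) : ℝ) / (2*k))
      simpa using h
    refine squeeze_zero_norm' ?_ htt
    filter_upwards [eventually_ge_atTop d] with z hz
    have hz0 : 0 < z := lt_of_lt_of_le hd hz
    have habs : ‖G z‖ = ψ z * (‖x + (z:ℂ)‖ ^ (-(1/2) : ℝ)) *
        (‖y + (z:ℂ)‖ ^ (-(3/2) : ℝ)) * (1/(2*k)) := by
      rw [hGdef]
      simp only [hVdef, norm_mul, habsP z hz0, habsQ z hz0,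
        stmt8_absV hk, Complex.norm_real, Real.norm_eq_abs, abs_of_nonneg (hψ01 z).1]
    rw [habs]
    have b1 : ‖x + (z:ℂ)‖ ^ (-(1/2) : ℝ) ≤ A ^ (-(1/2) : ℝ) :=
      Real.rpow_le_rpow_of_nonpos hA0 (stmt8_mono hxre hd.le hz) (by norm_num)
    have b2 : ‖y + (z:ℂ)‖ ^ (-(3/2) : ℝ) ≤ z ^ (-(3/2) : ℝ) :=
      Real.rpow_le_rpow_of_nonpos hz0 (stmt8_zle hyre z) (by norm_num)
    calc ψ z * (‖x + (z:ℂ)‖ ^ (-(1/2) : ℝ)) *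
          (‖y + (z:ℂ)‖ ^ (-(3/2) : ℝ)) * (1/(2*k))
        ≤ 1 * (A ^ (-(1/2) : ℝ)) * (z ^ (-(3/2) : ℝ)) * (1/(2*k)) :=
          stmt8_mul4 (hψ01 z).2 b1 b2 (Real.rpow_nonneg (norm_nonneg _) _)
            (Real.rpow_nonneg (norm_nonneg _) _) (by norm_num)
            (Real.rpow_nonneg hA0.le _) (by positivity)
      _ = (A ^ (-(1/2) : ℝ) / (2*k)) * z ^ (-(3/2) : ℝ) := by ring
  -- continuity pieces for measurability
  have contOnx : ∀ c : ℂ, ContinuousOn (fun z : ℝ => (x + (z:ℂ)) ^ c) (Ioi d) := by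
    intro c z hz
    exact ((stmt8_cpow hxre c (c-1) rfl (lt_trans hd hz)).continuousAt).continuousWithinAt
  have contOny : ∀ c : ℂ, ContinuousOn (fun z : ℝ => (y + (z:ℂ)) ^ c) (Ioi d) := by
    intro c z hz
    exact ((stmt8_cpow hyre c (c-1) rfl (lt_trans hd hz)).continuousAt).continuousWithinAt
  have contE : Continuous (fun z : ℝ => Complex.exp (2 * k * z * Complex.I)) := by
    apply Complex.continuous_exp.comp
    continuity
  have contV : Continuous V := contE.div_const _
  have contψC : Continuous (fun z : ℝ => ((ψ z : ℝ) : ℂ)) :=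
    Complex.continuous_ofReal.comp hψ.continuous
  have contDψC : Continuous (fun z : ℝ => ((deriv ψ z : ℝ) : ℂ)) :=
    Complex.continuous_ofReal.comp hDψcont
  have measF : AEStronglyMeasurable F (volume.restrict (Ioi d)) := by
    apply ContinuousOn.aestronglyMeasurable _ measurableSet_Ioi
    rw [hFdef]
    exact ((contψC.continuousOn.mul contE.continuousOn).mul (contOnx _)).mul (contOny _)
  have measW1 : AEStronglyMeasurable W1 (volume.restrict (Ioi d)) := by
    apply ContinuousOn.aestronglyMeasurable _ measurableSet_Ioi
    rw [hW1def]
    exact ((contDψC.continuousOn.mul (contOnx _)).mul (contOny _)).mul contV.continuousOn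
  have measW2 : AEStronglyMeasurable W2 (volume.restrict (Ioi d)) := by
    apply ContinuousOn.aestronglyMeasurable _ measurableSet_Ioi
    rw [hW2def]
    exact ((contψC.continuousOn.mul (continuousOn_const.mul (contOnx _))).mul
      (contOny _)).mul contV.continuousOn
  have measW3 : AEStronglyMeasurable W3 (volume.restrict (Ioi d)) := by
    apply ContinuousOn.aestronglyMeasurable _ measurableSet_Ioi
    rw [hW3def]
    exact ((contψC.continuousOn.mul (contOnx _)).mul
      (continuousOn_const.mul (contOny _))).mul contV.continuousOn
  -- profile integrals
  have intA3 : IntegrableOn (fun z : ℝ => (A - d + z) ^ (-(3/2) : ℝ)) (Ioi d) volume ∧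
      ∫ z in Ioi d, (A - d + z) ^ (-(3/2) : ℝ) = 2 * A ^ (-(1/2) : ℝ) := by
    have h := stmt8_int (p := (-(3/2) : ℝ)) (by norm_num) (c := A - d) (d := d) (by linarith)
    refine ⟨h.1, ?_⟩
    rw [h.2, show A - d + d = A by ring]
    norm_num
    ring
  have intB3 : IntegrableOn (fun z : ℝ => (B - d + z) ^ (-(3/2) : ℝ)) (Ioi d) volume ∧
      ∫ z in Ioi d, (B - d + z) ^ (-(3/2) : ℝ) = 2 * B ^ (-(1/2) : ℝ) := by
    have h := stmt8_int (p := (-(3/2) : ℝ)) (by norm_num) (c := B - d) (d := d) (by linarith)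
    refine ⟨h.1, ?_⟩
    rw [h.2, show B - d + d = B by ring]
    norm_num
    ring
  have intB5 : IntegrableOn (fun z : ℝ => (B - d + z) ^ (-(5/2) : ℝ)) (Ioi d) volume ∧
      ∫ z in Ioi d, (B - d + z) ^ (-(5/2) : ℝ) = (2/3) * B ^ (-(3/2) : ℝ) := by
    have h := stmt8_int (p := (-(5/2) : ℝ)) (by norm_num) (c := B - d) (d := d) (by linarith)
    refine ⟨h.1, ?_⟩
    rw [h.2, show B - d + d = B by ring]
    norm_num
    ring
  -- pointwise bounds and integral bounds term by term
  -- F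
  have hFb : IntegrableOn F (Ioi d) volume ∧ ‖∫ z in Ioi d, F z‖ ≤
      ∫ z in Ioi d, (A ^ (-(1/2) : ℝ) * 2 ^ ((3:ℝ)/2)) * (B - d + z) ^ (-(3/2) : ℝ) := by
    apply stmt8_bound measF ((intB3.1.const_mul _))
    intro z hz
    have hz0 : 0 < z := lt_of_lt_of_le hd (le_of_lt hz)
    have hdz : d ≤ z := le_of_lt hz
    have habs : ‖F z‖ = ψ z * 1 * (‖x + (z:ℂ)‖ ^ (-(1/2) : ℝ)) *
        (‖y + (z:ℂ)‖ ^ (-(3/2) : ℝ)) := by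
      rw [hFdef]
      simp only [norm_mul, habsP z hz0, habsQ z hz0, stmt8_absE,
        Complex.norm_real, Real.norm_eq_abs, abs_of_nonneg (hψ01 z).1]
    rw [habs]
    have b1 : ‖x + (z:ℂ)‖ ^ (-(1/2) : ℝ) ≤ A ^ (-(1/2) : ℝ) :=
      Real.rpow_le_rpow_of_nonpos hA0 (stmt8_mono hxre hd.le hdz) (by norm_num)
    have b2 : ‖y + (z:ℂ)‖ ^ (-(3/2) : ℝ) ≤
        2 ^ ((3:ℝ)/2) * (B - d + z) ^ (-(3/2) : ℝ) := by
      have := stmt8_half (u := B - d + z) (w := ‖y + (z:ℂ)‖) (q := ((3:ℝ)/2))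
        (by linarith) (stmt8_two hyre hd.le hdz) (by norm_num)
      convert this using 2 <;> norm_num
    calc ψ z * 1 * (‖x + (z:ℂ)‖ ^ (-(1/2) : ℝ)) *
          (‖y + (z:ℂ)‖ ^ (-(3/2) : ℝ))
        ≤ 1 * 1 * (A ^ (-(1/2) : ℝ)) * (2 ^ ((3:ℝ)/2) * (B - d + z) ^ (-(3/2) : ℝ)) :=
          stmt8_mul4' (hψ01 z).2 le_rfl b1 b2 (by norm_num)
            (Real.rpow_nonneg (norm_nonneg _) _)
            (Real.rpow_nonneg (norm_nonneg _) _) (by norm_num) (by norm_num)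
            (Real.rpow_nonneg hA0.le _)
      _ = (A ^ (-(1/2) : ℝ) * 2 ^ ((3:ℝ)/2)) * (B - d + z) ^ (-(3/2) : ℝ) := by ring
  -- W1
  have hW1b : IntegrableOn W1 (Ioi d) volume ∧ ‖∫ z in Ioi d, W1 z‖ ≤
      ∫ z in Ioi d, |deriv ψ z| * A ^ (-(1/2) : ℝ) * B ^ (-(3/2) : ℝ) * (1/(2*k)) := by
    apply stmt8_bound measW1 ((((hDψint.mul_const _).mul_const _).mul_const _).integrableOn)
    intro z hz
    have hz0 : 0 < z := lt_of_lt_of_le hd (le_of_lt hz)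
    have hdz : d ≤ z := le_of_lt hz
    have habs : ‖W1 z‖ = |deriv ψ z| * (‖x + (z:ℂ)‖ ^ (-(1/2) : ℝ)) *
        (‖y + (z:ℂ)‖ ^ (-(3/2) : ℝ)) * (1/(2*k)) := by
      rw [hW1def]
      simp only [hVdef, norm_mul, habsP z hz0, habsQ z hz0,
        stmt8_absV hk, Complex.norm_real, Real.norm_eq_abs]
    rw [habs]
    have b1 : ‖x + (z:ℂ)‖ ^ (-(1/2) : ℝ) ≤ A ^ (-(1/2) : ℝ) :=
      Real.rpow_le_rpow_of_nonpos hA0 (stmt8_mono hxre hd.le hdz) (by norm_num)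
    have b2 : ‖y + (z:ℂ)‖ ^ (-(3/2) : ℝ) ≤ B ^ (-(3/2) : ℝ) :=
      Real.rpow_le_rpow_of_nonpos hB0 (stmt8_mono hyre hd.le hdz) (by norm_num)
    exact stmt8_mul4 le_rfl b1 b2 (Real.rpow_nonneg (norm_nonneg _) _)
      (Real.rpow_nonneg (norm_nonneg _) _) (abs_nonneg _)
      (Real.rpow_nonneg hA0.le _) (by positivity)
  have hW1val : (∫ z in Ioi d, |deriv ψ z| * A ^ (-(1/2) : ℝ) * B ^ (-(3/2) : ℝ) * (1/(2*k))) =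
      (∫ z in Ioi d, |deriv ψ z|) * A ^ (-(1/2) : ℝ) * B ^ (-(3/2) : ℝ) * (1/(2*k)) := by
    rw [integral_mul_const, integral_mul_const, integral_mul_const]
  -- W3
  have hW3b : IntegrableOn W3 (Ioi d) volume ∧ ‖∫ z in Ioi d, W3 z‖ ≤
      ∫ z in Ioi d, (A ^ (-(1/2) : ℝ) * ((3/2) * 2 ^ ((5:ℝ)/2)) * (1/(2*k))) *
        (B - d + z) ^ (-(5/2) : ℝ) := by
    apply stmt8_bound measW3 (intB5.1.const_mul _)
    intro z hz
    have hz0 : 0 < z := lt_of_lt_of_le hd (le_of_lt hz)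
    have hdz : d ≤ z := le_of_lt hz
    have habs : ‖W3 z‖ = ψ z * (‖x + (z:ℂ)‖ ^ (-(1/2) : ℝ)) *
        ((3/2) * (‖y + (z:ℂ)‖ ^ (-(5/2) : ℝ))) * (1/(2*k)) := by
      rw [hW3def]
      simp only [hVdef, norm_mul, habsP z hz0, habsQ5 z hz0,
        stmt8_absV hk, Complex.norm_real, Real.norm_eq_abs, abs_of_nonneg (hψ01 z).1, habs32]
    rw [habs]
    have b1 : ‖x + (z:ℂ)‖ ^ (-(1/2) : ℝ) ≤ A ^ (-(1/2) : ℝ) :=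
      Real.rpow_le_rpow_of_nonpos hA0 (stmt8_mono hxre hd.le hdz) (by norm_num)
    have b5 : ‖y + (z:ℂ)‖ ^ (-(5/2) : ℝ) ≤
        2 ^ ((5:ℝ)/2) * (B - d + z) ^ (-(5/2) : ℝ) := by
      have := stmt8_half (u := B - d + z) (w := ‖y + (z:ℂ)‖) (q := ((5:ℝ)/2))
        (by linarith) (stmt8_two hyre hd.le hdz) (by norm_num)
      convert this using 2 <;> norm_num
    have b3 : (3/2 : ℝ) * (‖y + (z:ℂ)‖ ^ (-(5/2) : ℝ)) ≤
        (3/2) * (2 ^ ((5:ℝ)/2) * (B - d + z) ^ (-(5/2) : ℝ)) :=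
      mul_le_mul_of_nonneg_left b5 (by norm_num)
    calc ψ z * (‖x + (z:ℂ)‖ ^ (-(1/2) : ℝ)) *
          ((3/2) * (‖y + (z:ℂ)‖ ^ (-(5/2) : ℝ))) * (1/(2*k))
        ≤ 1 * (A ^ (-(1/2) : ℝ)) * ((3/2) * (2 ^ ((5:ℝ)/2) * (B - d + z) ^ (-(5/2) : ℝ))) *
            (1/(2*k)) :=
          stmt8_mul4 (hψ01 z).2 b1 b3 (Real.rpow_nonneg (norm_nonneg _) _)
            (mul_nonneg (by norm_num) (Real.rpow_nonneg (norm_nonneg _) _))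
            (by norm_num) (Real.rpow_nonneg hA0.le _) (by positivity)
      _ = (A ^ (-(1/2) : ℝ) * ((3/2) * 2 ^ ((5:ℝ)/2)) * (1/(2*k))) *
            (B - d + z) ^ (-(5/2) : ℝ) := by ring
  have hW3val : (∫ z in Ioi d, (A ^ (-(1/2) : ℝ) * ((3/2) * 2 ^ ((5:ℝ)/2)) * (1/(2*k))) *
        (B - d + z) ^ (-(5/2) : ℝ)) =
      (A ^ (-(1/2) : ℝ) * ((3/2) * 2 ^ ((5:ℝ)/2)) * (1/(2*k))) * ((2/3) * B ^ (-(3/2) : ℝ)) := by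
    rw [integral_const_mul, intB5.2]
  -- W2 (case split)
  have hW2b : IntegrableOn W2 (Ioi d) volume ∧ ‖∫ z in Ioi d, W2 z‖ ≤
      2 ^ ((3:ℝ)/2) * A ^ (-(1/2) : ℝ) * B ^ (-(3/2) : ℝ) * (1/(2*k)) := by
    have habsW2 : ∀ z ∈ Ioi d, ‖W2 z‖ = ψ z *
        ((1/2) * (‖x + (z:ℂ)‖ ^ (-(3/2) : ℝ))) *
        (‖y + (z:ℂ)‖ ^ (-(3/2) : ℝ)) * (1/(2*k)) := by
      intro z hz
      have hz0 : 0 < z := lt_of_lt_of_le hd (le_of_lt hz)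
      rw [hW2def]
      simp only [hVdef, norm_mul, habsP3 z hz0, habsQ z hz0,
        stmt8_absV hk, Complex.norm_real, Real.norm_eq_abs, abs_of_nonneg (hψ01 z).1, habs12]
    rcases le_total A B with hAB | hAB
    · have ptw : ∀ z ∈ Ioi d, ‖W2 z‖ ≤ ((1/2) * 2 ^ ((3:ℝ)/2) * B ^ (-(3/2) : ℝ) * (1/(2*k))) *
          (A - d + z) ^ (-(3/2) : ℝ) := by
        intro z hz
        have hz0 : 0 < z := lt_of_lt_of_le hd (le_of_lt hz)
        have hdz : d ≤ z := le_of_lt hz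
        rw [habsW2 z hz]
        have bh : ‖x + (z:ℂ)‖ ^ (-(3/2) : ℝ) ≤
            2 ^ ((3:ℝ)/2) * (A - d + z) ^ (-(3/2) : ℝ) := by
          have := stmt8_half (u := A - d + z) (w := ‖x + (z:ℂ)‖) (q := ((3:ℝ)/2))
            (by linarith) (stmt8_two hxre hd.le hdz) (by norm_num)
          convert this using 2 <;> norm_num
        have b1 : (1/2 : ℝ) * (‖x + (z:ℂ)‖ ^ (-(3/2) : ℝ)) ≤
            (1/2) * (2 ^ ((3:ℝ)/2) * (A - d + z) ^ (-(3/2) : ℝ)) :=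
          mul_le_mul_of_nonneg_left bh (by norm_num)
        have b2 : ‖y + (z:ℂ)‖ ^ (-(3/2) : ℝ) ≤ B ^ (-(3/2) : ℝ) :=
          Real.rpow_le_rpow_of_nonpos hB0 (stmt8_mono hyre hd.le hdz) (by norm_num)
        calc ψ z * ((1/2) * (‖x + (z:ℂ)‖ ^ (-(3/2) : ℝ))) *
              (‖y + (z:ℂ)‖ ^ (-(3/2) : ℝ)) * (1/(2*k))
            ≤ 1 * ((1/2) * (2 ^ ((3:ℝ)/2) * (A - d + z) ^ (-(3/2) : ℝ))) *
                (B ^ (-(3/2) : ℝ)) * (1/(2*k)) :=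
              stmt8_mul4 (hψ01 z).2 b1 b2
                (mul_nonneg (by norm_num) (Real.rpow_nonneg (norm_nonneg _) _))
                (Real.rpow_nonneg (norm_nonneg _) _) (by norm_num)
                (mul_nonneg (by norm_num)
                  (mul_nonneg hp32.le (Real.rpow_nonneg (by linarith) _))) (by positivity)
          _ = ((1/2) * 2 ^ ((3:ℝ)/2) * B ^ (-(3/2) : ℝ) * (1/(2*k))) *
                (A - d + z) ^ (-(3/2) : ℝ) := by ring
      have h := stmt8_bound measW2
        (intA3.1.const_mul ((1/2) * 2 ^ ((3:ℝ)/2) * B ^ (-(3/2) : ℝ) * (1/(2*k)))) ptw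
      refine ⟨h.1, le_trans h.2 ?_⟩
      rw [integral_const_mul, intA3.2]
      exact le_of_eq (by ring)
    · have ptw : ∀ z ∈ Ioi d, ‖W2 z‖ ≤ ((1/2) * 2 ^ ((3:ℝ)/2) * A ^ (-(3/2) : ℝ) * (1/(2*k))) *
          (B - d + z) ^ (-(3/2) : ℝ) := by
        intro z hz
        have hz0 : 0 < z := lt_of_lt_of_le hd (le_of_lt hz)
        have hdz : d ≤ z := le_of_lt hz
        rw [habsW2 z hz]
        have bh : ‖y + (z:ℂ)‖ ^ (-(3/2) : ℝ) ≤
            2 ^ ((3:ℝ)/2) * (B - d + z) ^ (-(3/2) : ℝ) := by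
          have := stmt8_half (u := B - d + z) (w := ‖y + (z:ℂ)‖) (q := ((3:ℝ)/2))
            (by linarith) (stmt8_two hyre hd.le hdz) (by norm_num)
          convert this using 2 <;> norm_num
        have b1 : (1/2 : ℝ) * (‖x + (z:ℂ)‖ ^ (-(3/2) : ℝ)) ≤
            (1/2) * (A ^ (-(3/2) : ℝ)) :=
          mul_le_mul_of_nonneg_left
            (Real.rpow_le_rpow_of_nonpos hA0 (stmt8_mono hxre hd.le hdz) (by norm_num))
            (by norm_num)
        calc ψ z * ((1/2) * (‖x + (z:ℂ)‖ ^ (-(3/2) : ℝ))) *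
              (‖y + (z:ℂ)‖ ^ (-(3/2) : ℝ)) * (1/(2*k))
            ≤ 1 * ((1/2) * (A ^ (-(3/2) : ℝ))) *
                (2 ^ ((3:ℝ)/2) * (B - d + z) ^ (-(3/2) : ℝ)) * (1/(2*k)) :=
              stmt8_mul4 (hψ01 z).2 b1 bh
                (mul_nonneg (by norm_num) (Real.rpow_nonneg (norm_nonneg _) _))
                (Real.rpow_nonneg (norm_nonneg _) _) (by norm_num)
                (mul_nonneg (by norm_num) (Real.rpow_nonneg hA0.le _)) (by positivity)
          _ = ((1/2) * 2 ^ ((3:ℝ)/2) * A ^ (-(3/2) : ℝ) * (1/(2*k))) *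
                (B - d + z) ^ (-(3/2) : ℝ) := by ring
      have h := stmt8_bound measW2
        (intB3.1.const_mul ((1/2) * 2 ^ ((3:ℝ)/2) * A ^ (-(3/2) : ℝ) * (1/(2*k)))) ptw
      refine ⟨h.1, le_trans h.2 ?_⟩
      rw [integral_const_mul, intB3.2]
      have hs := stmt8_swap hA0 hB0 hAB
      calc (1/2) * 2 ^ ((3:ℝ)/2) * A ^ (-(3/2) : ℝ) * (1/(2*k)) * (2 * B ^ (-(1/2) : ℝ))
          = 2 ^ ((3:ℝ)/2) * (A ^ (-(3/2) : ℝ) * B ^ (-(1/2) : ℝ)) * (1/(2*k)) := by ring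
        _ ≤ 2 ^ ((3:ℝ)/2) * (A ^ (-(1/2) : ℝ) * B ^ (-(3/2) : ℝ)) * (1/(2*k)) := by
            apply mul_le_mul_of_nonneg_right (mul_le_mul_of_nonneg_left hs hp32.le)
            positivity
        _ = 2 ^ ((3:ℝ)/2) * A ^ (-(1/2) : ℝ) * B ^ (-(3/2) : ℝ) * (1/(2*k)) := by ring
  -- integration by parts
  have hIBP : ∫ z in Ioi d, (F z + (W1 z + W2 z + W3 z)) = 0 - G d :=
    integral_Ioi_of_hasDerivAt_of_tendsto
      ((hG' d self_mem_Ici).continuousAt.continuousWithinAt)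
      (fun z hz => hG' z (mem_Ici.mpr (le_of_lt hz)))
      (hFb.1.add ((hW1b.1.add hW2b.1).add hW3b.1))
      hGtend
  have hglobal : (∫ z in Ioi d, F z) =
      -((∫ z in Ioi d, W1 z) + (∫ z in Ioi d, W2 z) + (∫ z in Ioi d, W3 z)) := by
    have hadd : ∫ z in Ioi d, (F z + (W1 z + W2 z + W3 z)) =
        (∫ z in Ioi d, F z) +
          ((∫ z in Ioi d, W1 z) + (∫ z in Ioi d, W2 z) + (∫ z in Ioi d, W3 z)) := by
      have i12 : IntegrableOn (fun z => W1 z + W2 z) (Ioi d) volume := hW1b.1.add hW2b.1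
      have i123 : IntegrableOn (fun z => W1 z + W2 z + W3 z) (Ioi d) volume :=
        i12.add hW3b.1
      rw [integral_add hFb.1 i123, integral_add i12 hW3b.1, integral_add hW1b.1 hW2b.1]
    have h0 : (∫ z in Ioi d, F z) +
        ((∫ z in Ioi d, W1 z) + (∫ z in Ioi d, W2 z) + (∫ z in Ioi d, W3 z)) = 0 := by
      rw [← hadd]
      rw [hIBP]
      rw [hGd]
      rw [sub_zero]
    exact eq_neg_of_add_eq_zero_left h0
  refine ⟨hFb.1, ?_⟩
  have habsF : ‖∫ z in Ioi d, F z‖ =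
      ‖(∫ z in Ioi d, W1 z) + (∫ z in Ioi d, W2 z) + (∫ z in Ioi d, W3 z)‖ := by
    rw [hglobal, norm_neg]
  rw [habsF]
  have t1 : ‖∫ z in Ioi d, W1 z‖ ≤
      (∫ z in Ioi d, |deriv ψ z|) * A ^ (-(1/2) : ℝ) * B ^ (-(3/2) : ℝ) * (1/(2*k)) :=
    hW1b.2.trans (le_of_eq hW1val)
  have t3 : ‖∫ z in Ioi d, W3 z‖ ≤
      2 ^ ((5:ℝ)/2) * A ^ (-(1/2) : ℝ) * B ^ (-(3/2) : ℝ) * (1/(2*k)) :=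
    (hW3b.2.trans (le_of_eq hW3val)).trans (le_of_eq (by ring))
  calc ‖(∫ z in Ioi d, W1 z) + (∫ z in Ioi d, W2 z) + (∫ z in Ioi d, W3 z)‖
      ≤ ‖∫ z in Ioi d, W1 z‖ + ‖∫ z in Ioi d, W2 z‖ + ‖∫ z in Ioi d, W3 z‖ :=
        norm_add₃_le
    _ ≤ (∫ z in Ioi d, |deriv ψ z|) * A ^ (-(1/2) : ℝ) * B ^ (-(3/2) : ℝ) * (1/(2*k)) +
          2 ^ ((3:ℝ)/2) * A ^ (-(1/2) : ℝ) * B ^ (-(3/2) : ℝ) * (1/(2*k)) +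
          2 ^ ((5:ℝ)/2) * A ^ (-(1/2) : ℝ) * B ^ (-(3/2) : ℝ) * (1/(2*k)) :=
        add_le_add (add_le_add t1 hW2b.2) t3
    _ = ((∫ z in Ioi d, |deriv ψ z|) + 2 ^ ((3:ℝ)/2) + 2 ^ ((5:ℝ)/2)) / (2 * k) *
          A ^ (-(1/2) : ℝ) * B ^ (-(3/2) : ℝ) := by ring

end
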